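/- arXiv:math/0208229 — 3 statements merged into one kernel-verified Lean document; each statement's English description precedes it below -/
import Mathlib

section
/- Let B be a 3×3 sign-skew-symmetric integer matrix whose diagram is an oriented triangle with positive entries a_1 = b_{12}, b_1 = b_{23}, c_1 = b_{31} and -a_2 = b_{21}, -b_2 = b_{32}, -c_2 = b_{13}, where c_2 has maximal absolute value among all entries. If B is 2-finite, then c_1 = a_2 b_2 and c_2 = a_1 b_1; consequently a_1 b_1 c_1 = a_2 b_2 c_2. -/
/-- Matrix mutation in direction `k` for integer matrices. -/
def mutZ {n : ℕ} (k : Fin n) (B : Matrix (Fin n) (Fin n) ℤ) : Matrix (Fin n) (Fin n) ℤ :=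
  Matrix.of fun i j =>
    if i = k ∨ j = k then -B i j
    else B i j + (|B i k| * B k j + B i k * |B k j|) / 2

/-- Sign-skew-symmetry for integer matrices. -/
def SignSkewSymmetric {n : ℕ} (B : Matrix (Fin n) (Fin n) ℤ) : Prop :=
  ∀ i j, (B i j = 0 ∧ B j i = 0) ∨ B i j * B j i < 0

/-- An integer matrix is 2-finite if every matrix obtained from it by a finite
sequence of mutations is sign-skew-symmetric with `|b'_ij b'_ji| ≤ 3`. -/
def TwoFinite {n : ℕ} (B : Matrix (Fin n) (Fin n) ℤ) : Prop :=
  ∀ l : List (Fin n),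
    SignSkewSymmetric (l.foldl (fun M k => mutZ k M) B) ∧
    ∀ i j, |(l.foldl (fun M k => mutZ k M) B) i j *
            (l.foldl (fun M k => mutZ k M) B) j i| ≤ 3

lemma key_arith (a₁ b₁ c₁ a₂ b₂ c₂ : ℤ)
    (ha₁ : 0 < a₁) (hb₁ : 0 < b₁) (hc₁ : 0 < c₁)
    (ha₂ : 0 < a₂) (hb₂ : 0 < b₂) (hc₂ : 0 < c₂)
    (hA : a₁ * a₂ ≤ 3) (hB : b₁ * b₂ ≤ 3) (hC : c₁ * c₂ ≤ 3)
    (hma : a₁ ≤ c₂) (hmb : b₁ ≤ c₂)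
    (hsign : (a₁ * b₁ - c₂ = 0 ∧ c₁ - a₂ * b₂ = 0) ∨
      (a₁ * b₁ - c₂) * (c₁ - a₂ * b₂) < 0) :
    c₁ = a₂ * b₂ ∧ c₂ = a₁ * b₁ := by
  have ba₁ : a₁ ≤ 3 := le_trans (le_mul_of_one_le_right ha₁.le ha₂) hA
  have ba₂ : a₂ ≤ 3 := le_trans (le_mul_of_one_le_left ha₂.le ha₁) hA
  have bb₁ : b₁ ≤ 3 := le_trans (le_mul_of_one_le_right hb₁.le hb₂) hB
  have bb₂ : b₂ ≤ 3 := le_trans (le_mul_of_one_le_left hb₂.le hb₁) hB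
  have bc₁ : c₁ ≤ 3 := le_trans (le_mul_of_one_le_right hc₁.le hc₂) hC
  have bc₂ : c₂ ≤ 3 := le_trans (le_mul_of_one_le_left hc₂.le hc₁) hC
  rcases hsign with ⟨h1, h2⟩ | h
  · omega
  · interval_cases a₁ <;> interval_cases a₂ <;> interval_cases b₁ <;>
      interval_cases b₂ <;> interval_cases c₁ <;> interval_cases c₂ <;> omega

/-- For a 2-finite `3 × 3` matrix whose diagram is a cyclically oriented triangle
with `b₁₂ = a₁ > 0`, `b₂₃ = b₁ > 0`, `b₃₁ = c₁ > 0`, `b₂₁ = -a₂`, `b₃₂ = -b₂`,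
`b₁₃ = -c₂` (with `a₂, b₂, c₂ > 0`), where `c₂` has maximal absolute value among
all the entries, one has `c₁ = a₂ b₂` and `c₂ = a₁ b₁`; consequently
`a₁ b₁ c₁ = a₂ b₂ c₂`. -/
theorem two_finite_triangle (B : Matrix (Fin 3) (Fin 3) ℤ)
    (a₁ b₁ c₁ a₂ b₂ c₂ : ℤ)
    (ha₁ : 0 < a₁) (hb₁ : 0 < b₁) (hc₁ : 0 < c₁)
    (ha₂ : 0 < a₂) (hb₂ : 0 < b₂) (hc₂ : 0 < c₂)
    (h01 : B 0 1 = a₁) (h12 : B 1 2 = b₁) (h20 : B 2 0 = c₁)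
    (h10 : B 1 0 = -a₂) (h21 : B 2 1 = -b₂) (h02 : B 0 2 = -c₂)
    (hmax : ∀ i j, |B i j| ≤ c₂)
    (h2f : TwoFinite B) :
    c₁ = a₂ * b₂ ∧ c₂ = a₁ * b₁ ∧ a₁ * b₁ * c₁ = a₂ * b₂ * c₂ := by
  -- bounds from the empty mutation list
  have h0 := (h2f []).2
  simp only [List.foldl_nil] at h0
  have hA : a₁ * a₂ ≤ 3 := by
    have := h0 0 1
    rw [h01, h10] at this
    have habs : |a₁ * -a₂| = a₁ * a₂ := by
      rw [abs_mul, abs_neg, abs_of_pos ha₁, abs_of_pos ha₂]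
    omega
  have hB : b₁ * b₂ ≤ 3 := by
    have := h0 1 2
    rw [h12, h21] at this
    have habs : |b₁ * -b₂| = b₁ * b₂ := by
      rw [abs_mul, abs_neg, abs_of_pos hb₁, abs_of_pos hb₂]
    omega
  have hC : c₁ * c₂ ≤ 3 := by
    have := h0 2 0
    rw [h20, h02] at this
    have habs : |c₁ * -c₂| = c₁ * c₂ := by
      rw [abs_mul, abs_neg, abs_of_pos hc₁, abs_of_pos hc₂]
    omega
  have hma : a₁ ≤ c₂ := by have := hmax 0 1; rw [h01, abs_of_pos ha₁] at this; exact this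
  have hmb : b₁ ≤ c₂ := by have := hmax 1 2; rw [h12, abs_of_pos hb₁] at this; exact this
  -- mutation at vertex 1
  have hS := (h2f [1]).1 0 2
  simp only [List.foldl_cons, List.foldl_nil] at hS
  have e1 : (mutZ 1 B) 0 2 = a₁ * b₁ - c₂ := by
    show (if (0 : Fin 3) = 1 ∨ (2 : Fin 3) = 1 then -B 0 2
      else B 0 2 + (|B 0 1| * B 1 2 + B 0 1 * |B 1 2|) / 2) = a₁ * b₁ - c₂
    rw [if_neg (by decide), h02, h01, h12, abs_of_pos ha₁, abs_of_pos hb₁]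
    have h2 : a₁ * b₁ + a₁ * b₁ = 2 * (a₁ * b₁) := by ring
    rw [h2, Int.mul_ediv_cancel_left _ two_ne_zero]
    ring
  have e2 : (mutZ 1 B) 2 0 = c₁ - a₂ * b₂ := by
    show (if (2 : Fin 3) = 1 ∨ (0 : Fin 3) = 1 then -B 2 0
      else B 2 0 + (|B 2 1| * B 1 0 + B 2 1 * |B 1 0|) / 2) = c₁ - a₂ * b₂
    rw [if_neg (by decide), h20, h21, h10, abs_neg, abs_neg,
      abs_of_pos hb₂, abs_of_pos ha₂]
    have h2 : b₂ * -a₂ + -b₂ * a₂ = 2 * (-(a₂ * b₂)) := by ring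
    rw [h2, Int.mul_ediv_cancel_left _ two_ne_zero]
    ring
  rw [e1, e2] at hS
  have hsign : (a₁ * b₁ - c₂ = 0 ∧ c₁ - a₂ * b₂ = 0) ∨
      (a₁ * b₁ - c₂) * (c₁ - a₂ * b₂) < 0 := by
    rcases hS with ⟨x, y⟩ | h
    · exact Or.inl ⟨x, y⟩
    · exact Or.inr h
  obtain ⟨e, f⟩ := key_arith a₁ b₁ c₁ a₂ b₂ c₂ ha₁ hb₁ hc₁ ha₂ hb₂ hc₂ hA hB hC hma hmb hsign
  refine ⟨e, f, ?_⟩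
  rw [← e, ← f]; ring
end

section
/- Let B be a 2-finite matrix. Then for any three distinct indices i, j, k, it is impossible that b_ij > 0, b_ik > 0, and b_kj > 0 simultaneously; i.e., every triangle in the diagram of B is cyclically oriented. -/
/-- In a 2-finite matrix, every triangle of the diagram is cyclically oriented:
for distinct `i, j, k` it is impossible that `b_ij > 0`, `b_ik > 0`, `b_kj > 0`
simultaneously. -/
theorem two_finite_triangle_cyclically_oriented {n : ℕ} (B : Matrix (Fin n) (Fin n) ℤ)
    (h2f : TwoFinite B) (i j k : Fin n)
    (hij : i ≠ j) (hik : i ≠ k) (hjk : j ≠ k) :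
    ¬(0 < B i j ∧ 0 < B i k ∧ 0 < B k j) := by
  rintro ⟨h1, h2, h3⟩
  have hss : SignSkewSymmetric B := (h2f []).1
  have hji : B j i < 0 := by
    rcases hss i j with ⟨e1, e2⟩ | hlt
    · omega
    · nlinarith
  have hjk' : B j k < 0 := by
    rcases hss k j with ⟨e1, e2⟩ | hlt
    · omega
    · nlinarith
  have hki : B k i < 0 := by
    rcases hss i k with ⟨e1, e2⟩ | hlt
    · omega
    · nlinarith
  have hb := (h2f [k]).2 i j
  simp only [List.foldl] at hb
  have e1 : mutZ k B i j = B i j + B i k * B k j := by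
    unfold mutZ
    rw [Matrix.of_apply, if_neg (by tauto), abs_of_pos h2, abs_of_pos h3]
    have h : B i k * B k j + B i k * B k j = 2 * (B i k * B k j) := by ring
    rw [h, Int.mul_ediv_cancel_left _ two_ne_zero]
  have e2 : mutZ k B j i = B j i - B j k * B k i := by
    unfold mutZ
    rw [Matrix.of_apply, if_neg (by tauto), abs_of_neg hjk', abs_of_neg hki]
    have h : -B j k * B k i + B j k * -B k i = 2 * (-(B j k * B k i)) := by ring
    rw [h, Int.mul_ediv_cancel_left _ two_ne_zero]
    ring
  rw [e1, e2] at hb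
  have hp : 1 ≤ B i k * B k j := by nlinarith
  have hq : 1 ≤ B j k * B k i := by nlinarith
  have habs : (B i j + B i k * B k j) * (B j i - B j k * B k i) ≤ -4 := by nlinarith
  rw [abs_of_nonpos (by linarith)] at hb
  omega
end

section
/- Let B be a 2-finite matrix. Then for any distinct indices i, j, k, one has b_{ij} b_{jk} b_{ki} = - b_{ji} b_{kj} b_{ik}. Moreover, in every triangle of the diagram of B (three vertices pairwise joined by edges) the multiset of edge weights |b_{xy} b_{yx}| is either {1,1,1} or {2,2,1}. -/
/-!
Orient the diagram by `i → j` when `b_ij > 0`. A 2-finite matrix stays 2-finite under one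
mutation, so it suffices to look at a single mutation at each vertex of the triangle. An acyclic
triangle `i → j → k`, `i → k` is impossible: mutating at `j` gives `b'_ik = b_ik + b_ij b_jk ≥ 2`
and `b'_ki = b_ki - b_kj b_ji ≤ -2`, an edge of weight at least `4`. In a cyclic triangle the
mutation at each vertex replaces the opposite edge by an explicit expression in the old entries,
and checking the `5³` cyclic triangles with edge weights at most `3` leaves exactly those with
`b_ij b_jk b_ki = -b_ji b_kj b_ik` and weights `{1, 1, 1}` or `{2, 2, 1}`. If an edge is missing,
both sides of the product identity vanish by sign-skew-symmetry.
-/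

def IsFinitePair (p q : ℤ) : Prop :=
  ((p = 0 ∧ q = 0) ∨ p * q < 0) ∧ |p * q| ≤ 3

instance (p q : ℤ) : Decidable (IsFinitePair p q) :=
  inferInstanceAs (Decidable (_ ∧ _))

namespace IsFinitePair

variable {p q : ℤ}

theorem neg_of_pos (h : IsFinitePair p q) (hp : 0 < p) : q < 0 := by
  rcases h.1 with ⟨rfl, -⟩ | h
  · exact absurd hp (lt_irrefl 0)
  · exact neg_of_mul_neg_right h hp.le

theorem pos_of_neg (h : IsFinitePair p q) (hp : p < 0) : 0 < q := by
  rcases h.1 with ⟨rfl, -⟩ | h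
  · exact absurd hp (lt_irrefl 0)
  · exact pos_of_mul_neg_right h hp.le

theorem eq_zero_iff (h : IsFinitePair p q) : p = 0 ↔ q = 0 := by
  rcases h.1 with ⟨hp, hq⟩ | h
  · simp [hp, hq]
  · constructor <;> rintro rfl <;> simp at h

def positivePairs : List (ℤ × ℤ) := [(1, -1), (1, -2), (2, -1), (1, -3), (3, -1)]

theorem mem_positivePairs (h : IsFinitePair p q) (hp : 0 < p) : (p, q) ∈ positivePairs := by
  have hq := h.neg_of_pos hp
  have hpq : p * -q ≤ 3 := by simpa [abs_of_neg (mul_neg_of_pos_of_neg hp hq)] using h.2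
  have hp3 : p ≤ 3 := by nlinarith
  have hq3 : -3 ≤ q := by nlinarith
  interval_cases p <;> interval_cases q <;> simp_all [positivePairs]

/-- The pairs are the edge opposite to each vertex of a cyclic triangle `i → j → k → i`
after mutating at that vertex, where `p = (b_ij, b_ji)`, `q = (b_jk, b_kj)`, `r = (b_ki, b_ik)`. -/
theorem cyclic_triangle_check : ∀ p ∈ positivePairs, ∀ q ∈ positivePairs, ∀ r ∈ positivePairs,
    IsFinitePair (r.2 + p.1 * q.1) (r.1 - q.2 * p.2) →
    IsFinitePair (p.2 + q.1 * r.1) (p.1 - r.2 * q.2) →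
    IsFinitePair (q.2 + r.1 * p.1) (q.1 - p.2 * r.2) →
    p.1 * q.1 * r.1 = -(p.2 * q.2 * r.2) ∧
    (({|p.1 * p.2|, |q.1 * q.2|, |r.2 * r.1|} : Multiset ℤ) = {1, 1, 1} ∨
      ({|p.1 * p.2|, |q.1 * q.2|, |r.2 * r.1|} : Multiset ℤ) = {2, 2, 1}) := by
  decide

end IsFinitePair

open IsFinitePair

section

variable {n : ℕ} {B : Matrix (Fin n) (Fin n) ℤ} {i j k : Fin n}

def weight (B : Matrix (Fin n) (Fin n) ℤ) (i j : Fin n) : ℤ := |B i j * B j i|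

theorem weight_comm (B : Matrix (Fin n) (Fin n) ℤ) (i j : Fin n) : weight B i j = weight B j i := by
  rw [weight, weight, mul_comm]

theorem mutZ_apply_of_ne (B : Matrix (Fin n) (Fin n) ℤ) (hik : i ≠ k) (hjk : j ≠ k) :
    mutZ k B i j = B i j + (|B i k| * B k j + B i k * |B k j|) / 2 := by
  simp [mutZ, hik, hjk]

theorem mutZ_apply_of_pos (hik : i ≠ k) (hjk : j ≠ k) (h₁ : 0 < B i k) (h₂ : 0 < B k j) :
    mutZ k B i j = B i j + B i k * B k j := by
  rw [mutZ_apply_of_ne B hik hjk, abs_of_pos h₁, abs_of_pos h₂, ← two_mul,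
    Int.mul_ediv_cancel_left _ two_ne_zero]

theorem mutZ_apply_of_neg (hik : i ≠ k) (hjk : j ≠ k) (h₁ : B i k < 0) (h₂ : B k j < 0) :
    mutZ k B i j = B i j - B i k * B k j := by
  rw [mutZ_apply_of_ne B hik hjk, abs_of_neg h₁, abs_of_neg h₂,
    show -B i k * B k j + B i k * -B k j = 2 * -(B i k * B k j) by ring,
    Int.mul_ediv_cancel_left _ two_ne_zero, sub_eq_add_neg]

namespace TwoFinite

theorem mutZ (h : TwoFinite B) (k : Fin n) : TwoFinite (mutZ k B) :=
  fun l => h (k :: l)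

theorem isFinitePair (h : TwoFinite B) (i j : Fin n) : IsFinitePair (B i j) (B j i) :=
  ⟨(h []).1 i j, (h []).2 i j⟩

theorem neg_of_pos (h : TwoFinite B) (hij : 0 < B i j) : B j i < 0 :=
  (h.isFinitePair i j).neg_of_pos hij

theorem pos_of_neg (h : TwoFinite B) (hij : B i j < 0) : 0 < B j i :=
  (h.isFinitePair i j).pos_of_neg hij

theorem not_acyclic_triangle (h : TwoFinite B) (hij : i ≠ j) (hjk : j ≠ k)
    (h₁ : 0 < B i j) (h₂ : 0 < B j k) (h₃ : 0 < B i k) : False := by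
  have hji := h.neg_of_pos h₁
  have hkj := h.neg_of_pos h₂
  have hki := h.neg_of_pos h₃
  have hM := ((h.mutZ j).isFinitePair i k).2
  rw [mutZ_apply_of_pos hij hjk.symm h₁ h₂, mutZ_apply_of_neg hjk.symm hij hkj hji] at hM
  have hik' : 2 ≤ B i k + B i j * B j k := by nlinarith
  have hki' : B k i - B k j * B j i ≤ -2 := by nlinarith
  rw [abs_of_neg (mul_neg_of_pos_of_neg (by linarith) (by linarith))] at hM
  nlinarith

theorem triangle_cyclic (h : TwoFinite B) (hij : i ≠ j) (hik : i ≠ k) (hjk : j ≠ k)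
    (hi : B i j ≠ 0) (hj : B j k ≠ 0) (hk : B i k ≠ 0) :
    (0 < B i j ∧ 0 < B j k ∧ 0 < B k i) ∨ (0 < B j i ∧ 0 < B k j ∧ 0 < B i k) := by
  rcases hi.lt_or_gt with hi | hi <;> rcases hj.lt_or_gt with hj | hj <;>
    rcases hk.lt_or_gt with hk | hk
  · exact (h.not_acyclic_triangle hjk.symm hij.symm (h.pos_of_neg hj) (h.pos_of_neg hi)
      (h.pos_of_neg hk)).elim
  · exact Or.inr ⟨h.pos_of_neg hi, h.pos_of_neg hj, hk⟩
  · exact (h.not_acyclic_triangle hjk hik.symm hj (h.pos_of_neg hk) (h.pos_of_neg hi)).elim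
  · exact (h.not_acyclic_triangle hij.symm hik (h.pos_of_neg hi) hk hj).elim
  · exact (h.not_acyclic_triangle hik.symm hij (h.pos_of_neg hk) hi (h.pos_of_neg hj)).elim
  · exact (h.not_acyclic_triangle hik hjk.symm hk (h.pos_of_neg hj) hi).elim
  · exact Or.inl ⟨hi, hj, h.pos_of_neg hk⟩
  · exact (h.not_acyclic_triangle hij hjk hi hj hk).elim

theorem cyclic_triangle (h : TwoFinite B) (hij : i ≠ j) (hik : i ≠ k) (hjk : j ≠ k)
    (h₁ : 0 < B i j) (h₂ : 0 < B j k) (h₃ : 0 < B k i) :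
    B i j * B j k * B k i = -(B j i * B k j * B i k) ∧
    (({weight B i j, weight B j k, weight B i k} : Multiset ℤ) = {1, 1, 1} ∨
      ({weight B i j, weight B j k, weight B i k} : Multiset ℤ) = {2, 2, 1}) := by
  have mem {x y : Fin n} (hxy : 0 < B x y) : (B x y, B y x) ∈ positivePairs :=
    (h.isFinitePair x y).mem_positivePairs hxy
  have hj := (h.mutZ j).isFinitePair i k
  rw [mutZ_apply_of_pos hij hjk.symm h₁ h₂,
    mutZ_apply_of_neg hjk.symm hij (h.neg_of_pos h₂) (h.neg_of_pos h₁)] at hj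
  have hk := (h.mutZ k).isFinitePair j i
  rw [mutZ_apply_of_pos hjk hik h₂ h₃,
    mutZ_apply_of_neg hik hjk (h.neg_of_pos h₃) (h.neg_of_pos h₂)] at hk
  have hi := (h.mutZ i).isFinitePair k j
  rw [mutZ_apply_of_pos hik.symm hij.symm h₃ h₁,
    mutZ_apply_of_neg hij.symm hik.symm (h.neg_of_pos h₁) (h.neg_of_pos h₃)] at hi
  exact cyclic_triangle_check _ (mem h₁) _ (mem h₂) _ (mem h₃) hj hk hi

theorem triangle_product (h : TwoFinite B) (hij : i ≠ j) (hik : i ≠ k) (hjk : j ≠ k) :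
    B i j * B j k * B k i = -(B j i * B k j * B i k) := by
  have hzero {x y : Fin n} (hxy : B x y = 0) : B y x = 0 :=
    (h.isFinitePair x y).eq_zero_iff.mp hxy
  by_cases hz : B i j = 0 ∨ B j k = 0 ∨ B i k = 0
  · rcases hz with hz | hz | hz <;> simp [hz, hzero hz]
  push Not at hz
  rcases h.triangle_cyclic hij hik hjk hz.1 hz.2.1 hz.2.2 with ⟨h₁, h₂, h₃⟩ | ⟨h₁, h₂, h₃⟩
  · exact (h.cyclic_triangle hij hik hjk h₁ h₂ h₃).1
  · linear_combination (h.cyclic_triangle hij.symm hjk hik h₁ h₃ h₂).1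

theorem triangle_weights (h : TwoFinite B) (hij : i ≠ j) (hik : i ≠ k) (hjk : j ≠ k)
    (h₁ : B i j ≠ 0) (h₂ : B j k ≠ 0) (h₃ : B i k ≠ 0) :
    ({weight B i j, weight B j k, weight B i k} : Multiset ℤ) = {1, 1, 1} ∨
      ({weight B i j, weight B j k, weight B i k} : Multiset ℤ) = {2, 2, 1} := by
  rcases h.triangle_cyclic hij hik hjk h₁ h₂ h₃ with ⟨h₁, h₂, h₃⟩ | ⟨h₁, h₂, h₃⟩
  · exact (h.cyclic_triangle hij hik hjk h₁ h₂ h₃).2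
  · have := (h.cyclic_triangle hij.symm hjk hik h₁ h₃ h₂).2
    rwa [weight_comm B j i, Multiset.pair_comm (weight B i k)] at this

end TwoFinite

end

/-- For a 2-finite matrix `B` and distinct indices `i, j, k`, one has
`b_ij b_jk b_ki = - b_ji b_kj b_ik`; moreover, if `i, j, k` are pairwise joined
by edges in the diagram of `B`, the multiset of edge weights `|b_xy b_yx|` of the
triangle is either `{1,1,1}` or `{2,2,1}`. -/
theorem two_finite_triangle_weights {n : ℕ} (B : Matrix (Fin n) (Fin n) ℤ)
    (h2f : TwoFinite B) (i j k : Fin n)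
    (hij : i ≠ j) (hik : i ≠ k) (hjk : j ≠ k) :
    B i j * B j k * B k i = -(B j i * B k j * B i k) ∧
    ((B i j ≠ 0 ∧ B j k ≠ 0 ∧ B i k ≠ 0) →
      ({|B i j * B j i|, |B j k * B k j|, |B i k * B k i|} : Multiset ℤ) = {1, 1, 1} ∨
      ({|B i j * B j i|, |B j k * B k j|, |B i k * B k i|} : Multiset ℤ) = {2, 2, 1}) :=
  ⟨h2f.triangle_product hij hik hjk, fun ⟨h₁, h₂, h₃⟩ =>
    h2f.triangle_weights hij hik hjk h₁ h₂ h₃⟩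
end
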